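/- arXiv:1802.09932 — 2 statements merged into one kernel-verified Lean document; each statement's English description precedes it below -/
import Mathlib

section
/- Sublinear convergence of VR-SGD (Option I, non-smooth composite, non-strongly convex): Under the per-epoch bound for the composite objective F = f + g with Option I (snapshot equal to the full epoch average and starting point equal to the last iterate), the output x̂^S satisfies E[F(x̂^S)] − F(x*) ≤ (2(m+1)/((β−5) m S)) (F(x̃^0) − F(x*)) + (β(β−1)L/(2(β−5) m S)) ‖x̃^0 − x*‖², provided β > 5. -/
/-!
Averages over all sample paths `ω` play the role of expectations. The iterate and snapshot in
force at inner step `(s, k)` do not depend on the index `ω s k` drawn there (proximal steps are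
unique), and resampling one entry of `ω` uniformly preserves averages; so the expected progress
of a step is the average over the `n` possible components. For a fixed iterate that average is
controlled by the proximal-gradient inequality together with the variance bound
`𝔼 ‖∇f x - v‖² ≤ 4L (F x - F* + F x̃ - F*)`, a consequence of co-coercivity of the `∇f_i`.
Summing over an epoch, bounding the snapshot by Jensen, and telescoping over epochs (the next
epoch starts at the last iterate) gives `(β - 5)/(β - 1) · m · ∑_s 𝔼 (F x̃^s - F*)` bounded by
the initial gaps; by convexity the output is no worse than the average snapshot.
-/

open scoped BigOperators RealInnerProductSpace
open Finset Filter Topology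

lemma nonpos_of_forall_le_mul {c K : ℝ} (h : ∀ t : ℝ, 0 < t → t ≤ 1 → c ≤ t * K) : c ≤ 0 := by
  have hlim : Tendsto (fun t : ℝ => t * K) (𝓝[>] 0) (𝓝 0) := by
    simpa using ((continuous_mul_const K).tendsto 0).mono_left nhdsWithin_le_nhds
  exact ge_of_tendsto hlim
    (eventually_of_mem (Ioc_mem_nhdsGT zero_lt_one) fun t ht => h t ht.1 ht.2)

section Smooth

variable {E : Type*} [NormedAddCommGroup E] [InnerProductSpace ℝ E] [CompleteSpace E]

structure IsLSmooth (h : E → ℝ) (L : ℝ) : Prop where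
  differentiable : Differentiable ℝ h
  lipschitz_gradient : ∀ a b, ‖gradient h a - gradient h b‖ ≤ L * ‖a - b‖

lemma hasDerivAt_comp_add_smul {h : E → ℝ} (hd : Differentiable ℝ h) (x u : E) (t : ℝ) :
    HasDerivAt (fun t : ℝ => h (x + t • u)) ⟪gradient h (x + t • u), u⟫ t := by
  have hline : HasDerivAt (fun s : ℝ => x + s • u) u t := by
    simpa using ((hasDerivAt_id t).smul_const u).const_add x
  exact (hd _).hasGradientAt.hasFDerivAt.comp_hasDerivAt t hline

lemma ConvexOn.add_inner_gradient_le {h : E → ℝ} (hc : ConvexOn ℝ Set.univ h)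
    (hd : Differentiable ℝ h) (x y : E) : h x + ⟪gradient h x, y - x⟫ ≤ h y := by
  have hline : ConvexOn ℝ Set.univ (fun t : ℝ => h (x + t • (y - x))) := by
    have e : (fun t : ℝ => h (x + t • (y - x))) = h ∘ AffineMap.lineMap x y := by
      funext t
      simp [AffineMap.lineMap_apply, add_comm]
    rw [e]
    simpa using hc.comp_affineMap (AffineMap.lineMap x y : ℝ →ᵃ[ℝ] E)
  have hder : HasDerivAt (fun t : ℝ => h (x + t • (y - x))) ⟪gradient h x, y - x⟫ 0 := by
    simpa using hasDerivAt_comp_add_smul hd x (y - x) 0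
  have := hline.deriv_le_slope (Set.mem_univ 0) (Set.mem_univ 1) one_pos hder.differentiableAt
  rw [hder.deriv, slope_def_field] at this
  simp only [one_smul, zero_smul, add_zero, sub_zero, div_one, add_sub_cancel] at this
  linarith

namespace IsLSmooth

variable {h : E → ℝ} {L : ℝ}

lemma le_add_inner_add_sq (hh : IsLSmooth h L) (x y : E) :
    h y ≤ h x + ⟪gradient h x, y - x⟫ + L / 2 * ‖y - x‖ ^ 2 := by
  set u := y - x
  set ψ : ℝ → ℝ := fun t => h (x + t • u) - t * ⟪gradient h x, u⟫ - t ^ 2 * (L / 2 * ‖u‖ ^ 2)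
  have hψ : ∀ t,
      HasDerivAt ψ (⟪gradient h (x + t • u) - gradient h x, u⟫ - t * (L * ‖u‖ ^ 2)) t := by
    intro t
    refine (((hasDerivAt_comp_add_smul hh.differentiable x u t).sub
      ((hasDerivAt_id t).mul_const ⟪gradient h x, u⟫)).sub
      ((hasDerivAt_pow 2 t).mul_const (L / 2 * ‖u‖ ^ 2))).congr_deriv ?_
    simp only [inner_sub_left]
    ring
  obtain ⟨t, ht, hslope⟩ := exists_hasDerivAt_eq_slope ψ _ zero_lt_one
    (fun t _ => (hψ t).continuousAt.continuousWithinAt) (fun t _ => hψ t)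
  have hinner : ⟪gradient h (x + t • u) - gradient h x, u⟫ ≤ t * (L * ‖u‖ ^ 2) := calc
    _ ≤ ‖gradient h (x + t • u) - gradient h x‖ * ‖u‖ := real_inner_le_norm _ _
    _ ≤ L * ‖x + t • u - x‖ * ‖u‖ := by gcongr; exact hh.lipschitz_gradient _ _
    _ = t * (L * ‖u‖ ^ 2) := by
      rw [add_sub_cancel_left, norm_smul, Real.norm_of_nonneg ht.1.le]; ring
  have : ψ 1 ≤ ψ 0 := by rw [sub_zero, div_one] at hslope; linarith
  simp only [ψ, u, one_smul, zero_smul, add_zero, add_sub_cancel, one_mul, one_pow, zero_mul,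
    sub_zero, zero_pow two_ne_zero] at this
  linarith

lemma sub_inner (hh : IsLSmooth h L) (c : E) :
    IsLSmooth (fun w => h w - ⟪c, w⟫) L ∧
      ∀ w, gradient (fun w => h w - ⟪c, w⟫) w = gradient h w - c := by
  have hgrad : ∀ w, HasGradientAt (fun w => h w - ⟪c, w⟫) (gradient h w - c) w := by
    intro w
    rw [hasGradientAt_iff_hasFDerivAt, map_sub]
    exact (hh.differentiable w).hasGradientAt.hasFDerivAt.sub
      (InnerProductSpace.toDual ℝ E c).hasFDerivAt
  refine ⟨⟨fun w => (hgrad w).differentiableAt, fun a b => ?_⟩, fun w => (hgrad w).gradient⟩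
  rw [(hgrad a).gradient, (hgrad b).gradient, sub_sub_sub_cancel_right]
  exact hh.lipschitz_gradient a b

lemma sq_norm_gradient_le_of_isMin (hh : IsLSmooth h L) (hL : 0 < L) {b : E}
    (hmin : ∀ w, h b ≤ h w) (a : E) : ‖gradient h a‖ ^ 2 ≤ 2 * L * (h a - h b) := by
  have hdesc := hh.le_add_inner_add_sq a (a - L⁻¹ • gradient h a)
  rw [sub_sub_cancel_left, inner_neg_right, real_inner_smul_right, norm_neg, norm_smul,
    real_inner_self_eq_norm_sq, Real.norm_of_nonneg (inv_nonneg.2 hL.le)] at hdesc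
  have := hmin (a - L⁻¹ • gradient h a)
  have key : L⁻¹ * ‖gradient h a‖ ^ 2 / 2 ≤ h a - h b := by
    have e : L / 2 * (L⁻¹ * ‖gradient h a‖) ^ 2 = L⁻¹ * ‖gradient h a‖ ^ 2 / 2 := by
      field_simp
    linarith
  rw [div_le_iff₀ two_pos, inv_mul_le_iff₀ hL] at key
  linarith

lemma sq_norm_gradient_sub_le (hh : IsLSmooth h L) (hc : ConvexOn ℝ Set.univ h) (hL : 0 < L)
    (a b : E) :
    ‖gradient h a - gradient h b‖ ^ 2 ≤ 2 * L * (h a - h b - ⟪gradient h b, a - b⟫) := by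
  obtain ⟨hφ, hφgrad⟩ := hh.sub_inner (gradient h b)
  have hmin : ∀ w, h b - ⟪gradient h b, b⟫ ≤ h w - ⟪gradient h b, w⟫ := by
    intro w
    have := hc.add_inner_gradient_le hh.differentiable b w
    rw [inner_sub_right] at this
    linarith
  have := hφ.sq_norm_gradient_le_of_isMin hL hmin a
  rw [hφgrad] at this
  rw [inner_sub_right]
  linarith

lemma sub_inner_gradient_le_of_isMin (hh : IsLSmooth h L) {g : E → ℝ}
    (hg : ConvexOn ℝ Set.univ g) {xstar : E} (hmin : ∀ z, h xstar + g xstar ≤ h z + g z) (z : E) :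
    g xstar - ⟪gradient h xstar, z - xstar⟫ ≤ g z := by
  suffices g xstar - g z - ⟪gradient h xstar, z - xstar⟫ ≤ 0 by linarith
  refine nonpos_of_forall_le_mul (K := L / 2 * ‖z - xstar‖ ^ 2) fun t ht0 ht1 => ?_
  have hdesc := hh.le_add_inner_add_sq xstar (xstar + t • (z - xstar))
  rw [add_sub_cancel_left, real_inner_smul_right, norm_smul, Real.norm_of_nonneg ht0.le,
    mul_pow] at hdesc
  have hconv : g (xstar + t • (z - xstar)) ≤ (1 - t) * g xstar + t * g z := by
    have hpt : xstar + t • (z - xstar) = (1 - t) • xstar + t • z := by module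
    rw [hpt]
    simpa only [smul_eq_mul] using hg.2 (Set.mem_univ xstar) (Set.mem_univ z)
      (by linarith : (0:ℝ) ≤ 1 - t) ht0.le (by ring)
  have := hmin (xstar + t • (z - xstar))
  have hts : t * (g xstar - g z - ⟪gradient h xstar, z - xstar⟫)
      ≤ t * (t * (L / 2 * ‖z - xstar‖ ^ 2)) := by nlinarith
  exact le_of_mul_le_mul_left hts ht0

end IsLSmooth

end Smooth

section Prox

variable {E : Type*} [NormedAddCommGroup E] [InnerProductSpace ℝ E]

/-- `x'` minimizes `y ↦ g y + ⟪v, y⟫ + q ‖y - x‖²`, i.e. `x' = prox_{g/(2q)} (x - v/(2q))`. -/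
def IsProxGradStep (g : E → ℝ) (q : ℝ) (v x x' : E) : Prop :=
  ∀ y, g x' + ⟪v, x'⟫ + q * ‖x' - x‖ ^ 2 ≤ g y + ⟪v, y⟫ + q * ‖y - x‖ ^ 2

namespace IsProxGradStep

variable {g : E → ℝ} {q : ℝ} {v x x' : E}

lemma three_point (hstep : IsProxGradStep g q v x x') (hg : ConvexOn ℝ Set.univ g) (y : E) :
    g x' + ⟪v, x' - y⟫ ≤ g y + q * (‖y - x‖ ^ 2 - ‖y - x'‖ ^ 2 - ‖x' - x‖ ^ 2) := by
  set w := y - x'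
  have hvar : g x' - g y - ⟪v, w⟫ - 2 * q * ⟪x' - x, w⟫ ≤ 0 := by
    refine nonpos_of_forall_le_mul (K := q * ‖w‖ ^ 2) fun t ht0 ht1 => ?_
    have hconv : g (x' + t • w) ≤ (1 - t) * g x' + t * g y := by
      have hpt : x' + t • w = (1 - t) • x' + t • y := by module
      rw [hpt]
      simpa only [smul_eq_mul] using hg.2 (Set.mem_univ x') (Set.mem_univ y)
        (by linarith : (0:ℝ) ≤ 1 - t) ht0.le (by ring)
    have hs := hstep (x' + t • w)
    have hsq : ‖x' + t • w - x‖ ^ 2 = ‖x' - x‖ ^ 2 + 2 * (t * ⟪x' - x, w⟫) + t ^ 2 * ‖w‖ ^ 2 := by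
      rw [show x' + t • w - x = (x' - x) + t • w by abel, norm_add_sq_real,
        real_inner_smul_right, norm_smul, Real.norm_of_nonneg ht0.le, mul_pow]
    rw [hsq, inner_add_right, real_inner_smul_right] at hs
    have hts : t * (g x' - g y - ⟪v, w⟫ - 2 * q * ⟪x' - x, w⟫) ≤ t * (t * (q * ‖w‖ ^ 2)) := by
      nlinarith
    exact le_of_mul_le_mul_left hts ht0
  have hpol : 2 * q * ⟪x' - x, w⟫ = q * (‖y - x‖ ^ 2 - ‖w‖ ^ 2 - ‖x' - x‖ ^ 2) := by
    rw [show y - x = w + (x' - x) by simp only [w]; abel, norm_add_sq_real, real_inner_comm]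
    ring
  have hv : ⟪v, x' - y⟫ = -⟪v, w⟫ := by rw [← inner_neg_right, neg_sub]
  linarith

lemma unique {x₁ x₂ : E} (h₁ : IsProxGradStep g q v x x₁) (h₂ : IsProxGradStep g q v x x₂)
    (hg : ConvexOn ℝ Set.univ g) (hq : 0 < q) : x₁ = x₂ := by
  have t₁ := h₁.three_point hg x₂
  have t₂ := h₂.three_point hg x₁
  have hinner : ⟪v, x₁ - x₂⟫ + ⟪v, x₂ - x₁⟫ = 0 := by
    rw [← inner_add_right, sub_add_sub_cancel, sub_self, inner_zero_right]
  rw [norm_sub_rev x₂ x₁] at t₁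
  have : ‖x₁ - x₂‖ ^ 2 = 0 := by nlinarith [sq_nonneg ‖x₁ - x₂‖]
  simpa [sub_eq_zero] using this

/-- One inexact proximal gradient step on `f + g` with the direction `v` in place of `∇f x`. -/
lemma le_of_isLSmooth [CompleteSpace E] (hstep : IsProxGradStep g q v x x') {f : E → ℝ}
    {L c : ℝ} (hf : IsLSmooth f L) (hfc : ConvexOn ℝ Set.univ f) (hg : ConvexOn ℝ Set.univ g)
    (hc : 0 < c) (hq : 2 * q = L + c) (y : E) :
    f x' + g x' ≤ f y + g y + ‖gradient f x - v‖ ^ 2 / (2 * c)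
      + ⟪gradient f x - v, x - y⟫ + q * (‖x - y‖ ^ 2 - ‖x' - y‖ ^ 2) := by
  set Δ := gradient f x - v
  have h3 := hstep.three_point hg y
  have hdesc := hf.le_add_inner_add_sq x x'
  have hconv := hfc.add_inner_gradient_le hf.differentiable x y
  have hsplit : ⟪gradient f x, x' - x⟫ - ⟪gradient f x, y - x⟫ - ⟪v, x' - y⟫
      = ⟪Δ, x' - x⟫ + ⟪Δ, x - y⟫ := by
    simp only [Δ, inner_sub_left, inner_sub_right]
    ring
  have hyoung : ⟪Δ, x' - x⟫ ≤ ‖Δ‖ ^ 2 / (2 * c) + c / 2 * ‖x' - x‖ ^ 2 := by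
    have := real_inner_le_norm Δ (x' - x)
    have : ‖Δ‖ * ‖x' - x‖ ≤ ‖Δ‖ ^ 2 / (2 * c) + c / 2 * ‖x' - x‖ ^ 2 := by
      rw [div_add' _ _ _ (by positivity), le_div_iff₀ (by positivity)]
      nlinarith [sq_nonneg (‖Δ‖ - c * ‖x' - x‖)]
    linarith
  rw [norm_sub_rev y x, norm_sub_rev y x'] at h3
  nlinarith

end IsProxGradStep

lemma convexOn_of_eq_avg {n : ℕ} {f : Fin n → E → ℝ} {favg : E → ℝ}
    (hfc : ∀ i, ConvexOn ℝ Set.univ (f i))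
    (hfavg : ∀ z, favg z = (1 / n : ℝ) * ∑ i, f i z) : ConvexOn ℝ Set.univ favg := by
  have hsum : ConvexOn ℝ Set.univ (∑ i, f i) :=
    Finset.sum_induction _ (ConvexOn ℝ Set.univ) (fun _ _ => ConvexOn.add)
      (convexOn_const 0 convex_univ) fun i _ => hfc i
  obtain rfl : favg = fun z => (1 / n : ℝ) * ∑ i, f i z := funext hfavg
  simpa [Finset.sum_apply] using hsum.smul (c := (1 / n : ℝ)) (by positivity)

lemma sum_sq_norm_sub_le_of_sum_eq {ι : Type*} [Fintype ι] (Y : ι → E) (c : E)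
    (hY : ∑ i, Y i = (Fintype.card ι : ℝ) • c) : ∑ i, ‖c - Y i‖ ^ 2 ≤ ∑ i, ‖Y i‖ ^ 2 := by
  have : ∑ i, ‖c - Y i‖ ^ 2 = ∑ i, ‖Y i‖ ^ 2 - Fintype.card ι * ‖c‖ ^ 2 := by
    simp only [norm_sub_sq_real, sum_add_distrib, sum_sub_distrib, ← mul_sum, ← inner_sum, hY,
      real_inner_smul_right, real_inner_self_eq_norm_sq, sum_const, card_univ, nsmul_eq_mul]
    ring
  rw [this]
  exact sub_le_self _ (by positivity)

end Prox

section Average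

variable {E : Type*} [NormedAddCommGroup E] [InnerProductSpace ℝ E] [CompleteSpace E]
  {n : ℕ} {f : Fin n → E → ℝ} {favg : E → ℝ}

lemma hasGradientAt_of_eq_avg (hf : ∀ i, Differentiable ℝ (f i))
    (hfavg : ∀ z, favg z = (1 / n : ℝ) * ∑ i, f i z) (z : E) :
    HasGradientAt favg ((1 / n : ℝ) • ∑ i, gradient (f i) z) z := by
  obtain rfl : favg = fun z => (1 / n : ℝ) * ∑ i, f i z := funext hfavg
  rw [hasGradientAt_iff_hasFDerivAt, map_smul, map_sum]
  exact (HasFDerivAt.fun_sum fun i _ => (hf i z).hasGradientAt.hasFDerivAt).const_mul _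

lemma sum_gradient_eq_of_eq_avg (hn : 0 < n) (hf : ∀ i, Differentiable ℝ (f i))
    (hfavg : ∀ z, favg z = (1 / n : ℝ) * ∑ i, f i z) (z : E) :
    ∑ i, gradient (f i) z = (n : ℝ) • gradient favg z := by
  rw [(hasGradientAt_of_eq_avg hf hfavg z).gradient, smul_smul,
    mul_one_div_cancel (by positivity), one_smul]

lemma IsLSmooth.of_eq_avg {L : ℝ} (hn : 0 < n) (hf : ∀ i, IsLSmooth (f i) L)
    (hfavg : ∀ z, favg z = (1 / n : ℝ) * ∑ i, f i z) : IsLSmooth favg L where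
  differentiable z :=
    (hasGradientAt_of_eq_avg (fun i => (hf i).differentiable) hfavg z).differentiableAt
  lipschitz_gradient a b := by
    have hgrad := hasGradientAt_of_eq_avg (fun i => (hf i).differentiable) hfavg
    rw [(hgrad a).gradient, (hgrad b).gradient, ← smul_sub, ← sum_sub_distrib, norm_smul,
      Real.norm_of_nonneg (by positivity)]
    calc 1 / n * ‖∑ i, (gradient (f i) a - gradient (f i) b)‖
        ≤ 1 / n * ∑ _i : Fin n, L * ‖a - b‖ := by
          gcongr
          exact (norm_sum_le _ _).trans (sum_le_sum fun i _ => (hf i).lipschitz_gradient a b)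
      _ = L * ‖a - b‖ := by
          rw [sum_const, card_univ, Fintype.card_fin, nsmul_eq_mul]
          field_simp

variable {L : ℝ} {g F : E → ℝ} {xstar : E}

lemma sum_sq_norm_gradient_sub_le (hn : 0 < n) (hL : 0 < L) (hf : ∀ i, IsLSmooth (f i) L)
    (hfc : ∀ i, ConvexOn ℝ Set.univ (f i)) (hfavg : ∀ z, favg z = (1 / n : ℝ) * ∑ i, f i z)
    (hg : ConvexOn ℝ Set.univ g) (hF : ∀ z, F z = favg z + g z) (hmin : ∀ z, F xstar ≤ F z)
    (z : E) :
    ∑ i, ‖gradient (f i) z - gradient (f i) xstar‖ ^ 2 ≤ 2 * L * n * (F z - F xstar) := by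
  have hopt := (IsLSmooth.of_eq_avg hn hf hfavg).sub_inner_gradient_le_of_isMin hg
    (fun z => by simpa only [hF] using hmin z) z
  calc ∑ i, ‖gradient (f i) z - gradient (f i) xstar‖ ^ 2
      ≤ ∑ i, 2 * L * (f i z - f i xstar - ⟪gradient (f i) xstar, z - xstar⟫) :=
        sum_le_sum fun i _ => (hf i).sq_norm_gradient_sub_le (hfc i) hL z xstar
    _ = 2 * L * n * (favg z - favg xstar - ⟪gradient favg xstar, z - xstar⟫) := by
        rw [← mul_sum, sum_sub_distrib, sum_sub_distrib, ← sum_inner,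
          sum_gradient_eq_of_eq_avg hn (fun i => (hf i).differentiable) hfavg, hfavg, hfavg,
          real_inner_smul_left]
        field_simp
    _ ≤ 2 * L * n * (F z - F xstar) :=
        mul_le_mul_of_nonneg_left (by rw [hF, hF]; linarith) (by positivity)

/-- The variance-reduced (SVRG) estimate of `∇favg x` from the component `i` and the
snapshot `xt`. -/
noncomputable def vrGradient {ι : Type*} (f : ι → E → ℝ) (favg : E → ℝ) (i : ι) (x xt : E) : E :=
  gradient (f i) x - gradient (f i) xt + gradient favg xt

lemma sum_sq_norm_sub_vrGradient_le (hn : 0 < n) (hL : 0 < L) (hf : ∀ i, IsLSmooth (f i) L)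
    (hfc : ∀ i, ConvexOn ℝ Set.univ (f i)) (hfavg : ∀ z, favg z = (1 / n : ℝ) * ∑ i, f i z)
    (hg : ConvexOn ℝ Set.univ g) (hF : ∀ z, F z = favg z + g z) (hmin : ∀ z, F xstar ≤ F z)
    (X Xt : E) :
    ∑ i, ‖gradient favg X - vrGradient f favg i X Xt‖ ^ 2
      ≤ 4 * L * n * ((F X - F xstar) + (F Xt - F xstar)) := by
  have hgr := sum_gradient_eq_of_eq_avg hn (fun i => (hf i).differentiable) hfavg
  have hcoco := sum_sq_norm_gradient_sub_le hn hL hf hfc hfavg hg hF hmin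
  set Y := fun i => gradient (f i) X - gradient (f i) Xt
  have hY : ∑ i, Y i = (Fintype.card (Fin n) : ℝ) • (gradient favg X - gradient favg Xt) := by
    simp only [Y, sum_sub_distrib, hgr, Fintype.card_fin, smul_sub]
  have hsplit : ∀ i, ‖Y i‖ ^ 2 ≤ 2 * ‖gradient (f i) X - gradient (f i) xstar‖ ^ 2
      + 2 * ‖gradient (f i) Xt - gradient (f i) xstar‖ ^ 2 := by
    intro i
    have := parallelogram_law_with_norm ℝ (gradient (f i) X - gradient (f i) xstar)
      (gradient (f i) Xt - gradient (f i) xstar)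
    rw [sub_sub_sub_cancel_right] at this
    nlinarith [norm_nonneg (gradient (f i) X - gradient (f i) xstar
      + (gradient (f i) Xt - gradient (f i) xstar))]
  calc ∑ i, ‖gradient favg X - vrGradient f favg i X Xt‖ ^ 2
      = ∑ i, ‖(gradient favg X - gradient favg Xt) - Y i‖ ^ 2 := by
        congr! 3 with i
        simp only [vrGradient, Y]
        abel
    _ ≤ ∑ i, ‖Y i‖ ^ 2 := sum_sq_norm_sub_le_of_sum_eq Y _ hY
    _ ≤ ∑ i, (2 * ‖gradient (f i) X - gradient (f i) xstar‖ ^ 2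
          + 2 * ‖gradient (f i) Xt - gradient (f i) xstar‖ ^ 2) := sum_le_sum fun i _ => hsplit i
    _ ≤ 2 * (2 * L * n * (F X - F xstar)) + 2 * (2 * L * n * (F Xt - F xstar)) := by
        rw [sum_add_distrib, ← mul_sum, ← mul_sum]
        gcongr
        exacts [hcoco X, hcoco Xt]
    _ = 4 * L * n * ((F X - F xstar) + (F Xt - F xstar)) := by ring

theorem expect_vrGradient_step_le {β : ℝ} (hn : 0 < n) (hL : 0 < L) (hβ : 1 < β)
    (hf : ∀ i, IsLSmooth (f i) L) (hfc : ∀ i, ConvexOn ℝ Set.univ (f i))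
    (hfavg : ∀ z, favg z = (1 / n : ℝ) * ∑ i, f i z) (hg : ConvexOn ℝ Set.univ g)
    (hF : ∀ z, F z = favg z + g z) (hmin : ∀ z, F xstar ≤ F z) {X Xt : E} {Xp : Fin n → E}
    (hstep : ∀ i, IsProxGradStep g (L * β / 2) (vrGradient f favg i X Xt) X (Xp i)) :
    𝔼 i, (F (Xp i) - F xstar) ≤ 2 / (β - 1) * ((F X - F xstar) + (F Xt - F xstar))
      + L * β / 2 * (‖X - xstar‖ ^ 2 - 𝔼 i, ‖Xp i - xstar‖ ^ 2) := by
  have := Fin.pos_iff_nonempty.1 hn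
  have hc : 0 < (β - 1) * L := mul_pos (by linarith) hL
  set Δ := fun i => gradient favg X - vrGradient f favg i X Xt
  have hi : ∀ i, F (Xp i) - F xstar ≤ ‖Δ i‖ ^ 2 / (2 * ((β - 1) * L)) + ⟪Δ i, X - xstar⟫
      + L * β / 2 * (‖X - xstar‖ ^ 2 - ‖Xp i - xstar‖ ^ 2) := by
    intro i
    have := (hstep i).le_of_isLSmooth (IsLSmooth.of_eq_avg hn hf hfavg)
      (convexOn_of_eq_avg hfc hfavg) hg hc (by ring) xstar
    rw [hF, hF]
    linarith
  have hΔ : ∑ i, Δ i = 0 := by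
    simp only [Δ, vrGradient, sum_sub_distrib, sum_add_distrib, sum_const, card_univ,
      Fintype.card_fin, sum_gradient_eq_of_eq_avg hn (fun i => (hf i).differentiable) hfavg,
      ← Nat.cast_smul_eq_nsmul ℝ]
    abel
  have hvar : (∑ i, ‖Δ i‖ ^ 2) / n / (2 * ((β - 1) * L))
      ≤ 2 / (β - 1) * ((F X - F xstar) + (F Xt - F xstar)) := by
    rw [div_div, div_le_iff₀ (by positivity)]
    calc ∑ i, ‖Δ i‖ ^ 2 ≤ 4 * L * n * ((F X - F xstar) + (F Xt - F xstar)) :=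
          sum_sq_norm_sub_vrGradient_le hn hL hf hfc hfavg hg hF hmin X Xt
      _ = _ := by field_simp [(show (0:ℝ) < β - 1 by linarith).ne']; ring
  calc 𝔼 i, (F (Xp i) - F xstar)
      ≤ 𝔼 i, (‖Δ i‖ ^ 2 / (2 * ((β - 1) * L)) + ⟪Δ i, X - xstar⟫
          + L * β / 2 * (‖X - xstar‖ ^ 2 - ‖Xp i - xstar‖ ^ 2)) :=
        expect_le_expect fun i _ => hi i
    _ = (∑ i, ‖Δ i‖ ^ 2) / n / (2 * ((β - 1) * L))
          + L * β / 2 * (‖X - xstar‖ ^ 2 - 𝔼 i, ‖Xp i - xstar‖ ^ 2) := by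
        rw [expect_add_distrib, expect_add_distrib, ← expect_div, ← mul_expect,
          expect_sub_distrib, Fintype.expect_const,
          Fintype.expect_eq_sum_div_card (fun i => ⟪Δ i, _⟫),
          ← sum_inner, hΔ, inner_zero_left, zero_div, add_zero,
          Fintype.expect_eq_sum_div_card (fun i => ‖Δ i‖ ^ 2), Fintype.card_fin]
    _ ≤ _ := by gcongr

end Average

section Resampling

variable {α β γ : Type*} [DecidableEq α] [DecidableEq β]

def resample (ω : α → β → γ) (a : α) (b : β) (j : γ) : α → β → γ :=
  Function.update ω a (Function.update (ω a) b j)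

@[simp] lemma resample_apply_self (ω : α → β → γ) (a : α) (b : β) (j : γ) :
    resample ω a b j a b = j := by
  simp [resample]

lemma resample_apply_of_ne (ω : α → β → γ) {a a' : α} {b b' : β} (j : γ)
    (h : a' ≠ a ∨ b' ≠ b) :
    resample ω a b j a' b' = ω a' b' := by
  rcases eq_or_ne a' a with rfl | ha
  · simp [resample, h.resolve_left (not_not.2 rfl)]
  · simp [resample, ha]

lemma resample_resample_self (ω : α → β → γ) (a : α) (b : β) (j : γ) :
    resample (resample ω a b j) a b (ω a b) = ω := by
  funext a' b'
  simp only [resample, Function.update_apply]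
  split_ifs <;> simp_all

lemma expect_expect_resample [Fintype α] [Fintype β] [Fintype γ] [Nonempty γ]
    (G : (α → β → γ) → ℝ) (a : α) (b : β) :
    𝔼 ω, 𝔼 j, G (resample ω a b j) = 𝔼 ω, G ω := by
  have hinv : Function.Involutive fun p : (α → β → γ) × γ => (resample p.1 a b p.2, p.1 a b) :=
    fun p => Prod.ext (resample_resample_self p.1 a b p.2) (resample_apply_self p.1 a b p.2)
  calc 𝔼 ω, 𝔼 j, G (resample ω a b j)
      = 𝔼 p : (α → β → γ) × γ, G (resample p.1 a b p.2) := by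
        rw [← univ_product_univ]
        exact (expect_product' _ _ fun ω j => G (resample ω a b j)).symm
    _ = 𝔼 p : (α → β → γ) × γ, G p.1 :=
        Fintype.expect_equiv (hinv.toPerm _) _ _ fun _ => rfl
    _ = 𝔼 ω, G ω := by
        rw [← univ_product_univ, expect_product' _ _ fun ω _ => G ω]
        simp only [Fintype.expect_const]

end Resampling

section Adapted

variable {E γ : Type*} {S m : ℕ}
  {x : (Fin S → Fin m → γ) → ℕ → ℕ → E} {xt : (Fin S → Fin m → γ) → ℕ → E}

lemma iterate_eq_of_eq_within_epoch
    (hdet : ∀ ω ω' (s : Fin S) (k : Fin m), ω s k = ω' s k → x ω s k = x ω' s k →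
      xt ω s = xt ω' s → x ω s ((k : ℕ) + 1) = x ω' s ((k : ℕ) + 1))
    {ω ω' : Fin S → Fin m → γ} (s : Fin S) (h0 : x ω s 0 = x ω' s 0) (ht : xt ω s = xt ω' s)
    {k : ℕ} (hk : k ≤ m) (hagree : ∀ k' : Fin m, (k' : ℕ) < k → ω s k' = ω' s k') :
    x ω s k = x ω' s k := by
  induction k with
  | zero => exact h0
  | succ k ih =>
    exact hdet ω ω' s ⟨k, hk⟩ (hagree ⟨k, hk⟩ k.lt_succ_self)
      (ih (by omega) fun k' hk' => hagree k' (by omega)) ht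

lemma snapshot_eq_of_eq_on_epochs [AddCommGroup E] [Module ℝ E]
    (hdet : ∀ ω ω' (s : Fin S) (k : Fin m), ω s k = ω' s k → x ω s k = x ω' s k →
      xt ω s = xt ω' s → x ω s ((k : ℕ) + 1) = x ω' s ((k : ℕ) + 1))
    {x0 : E} (hxt0 : ∀ ω, xt ω 0 = x0) (hx0 : ∀ ω, x ω 0 0 = x0)
    (hstart : ∀ ω (s : ℕ), s + 1 < S → x ω (s + 1) 0 = x ω s m)
    (hsnap : ∀ ω (s : Fin S),
      xt ω ((s : ℕ) + 1) = (1 / m : ℝ) • ∑ k ∈ range m, x ω (s : ℕ) (k + 1))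
    {s : ℕ} (hs : s ≤ S) {ω ω' : Fin S → Fin m → γ}
    (hagree : ∀ s' : Fin S, (s' : ℕ) < s → ω s' = ω' s') :
    xt ω s = xt ω' s ∧ (s < S → x ω s 0 = x ω' s 0) := by
  induction s with
  | zero => exact ⟨by rw [hxt0, hxt0], fun _ => by rw [hx0, hx0]⟩
  | succ s ih =>
    obtain ⟨ht, h0⟩ := ih (by omega) fun s' hs' => hagree s' (by omega)
    have hepoch : ∀ k ≤ m, x ω s k = x ω' s k := fun k hk =>
      iterate_eq_of_eq_within_epoch hdet ⟨s, by omega⟩ (h0 (by omega)) ht hk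
        fun k' _ => congrFun (hagree ⟨s, by omega⟩ (by simp)) k'
    refine ⟨?_, fun hs1 => ?_⟩
    · rw [hsnap ω ⟨s, by omega⟩, hsnap ω' ⟨s, by omega⟩]
      exact congrArg _ (sum_congr rfl fun k hk => hepoch _ (by simp at hk; omega))
    · rw [hstart ω s hs1, hstart ω' s hs1]
      exact hepoch m le_rfl

lemma iterate_resample [AddCommGroup E] [Module ℝ E]
    (hdet : ∀ ω ω' (s : Fin S) (k : Fin m), ω s k = ω' s k → x ω s k = x ω' s k →
      xt ω s = xt ω' s → x ω s ((k : ℕ) + 1) = x ω' s ((k : ℕ) + 1))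
    {x0 : E} (hxt0 : ∀ ω, xt ω 0 = x0) (hx0 : ∀ ω, x ω 0 0 = x0)
    (hstart : ∀ ω (s : ℕ), s + 1 < S → x ω (s + 1) 0 = x ω s m)
    (hsnap : ∀ ω (s : Fin S),
      xt ω ((s : ℕ) + 1) = (1 / m : ℝ) • ∑ k ∈ range m, x ω (s : ℕ) (k + 1))
    (ω : Fin S → Fin m → γ) (s : Fin S) (k : Fin m) (j : γ) :
    x (resample ω s k j) s k = x ω s k ∧ xt (resample ω s k j) s = xt ω s := by
  obtain ⟨ht, h0⟩ := snapshot_eq_of_eq_on_epochs (ω := resample ω s k j) (ω' := ω) hdet hxt0 hx0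
    hstart hsnap s.isLt.le fun s' hs' => Function.update_of_ne (Fin.ne_of_lt hs') _ _
  exact ⟨iterate_eq_of_eq_within_epoch hdet s (h0 s.isLt) ht k.isLt.le fun k' hk' =>
    resample_apply_of_ne ω j (Or.inr (Fin.ne_of_lt hk')), ht⟩

end Adapted

section Recursion

lemma sum_range_sub_of_chain {M : Type*} [AddCommGroup M] {u v : ℕ → M} {S : ℕ} (hS : 0 < S)
    (h : ∀ s, s + 1 < S → u (s + 1) = v s) : ∑ s ∈ range S, (u s - v s) = u 0 - v (S - 1) := by
  induction S with
  | zero => omega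
  | succ S ih =>
    rcases Nat.eq_zero_or_pos S with rfl | hS
    · simp
    rw [sum_range_succ, ih hS fun s hs => h s (by omega), ← h (S - 1) (by omega),
      Nat.sub_add_cancel hS, Nat.add_sub_cancel]
    abel

lemma epoch_le {m : ℕ} {γ c b b' : ℝ} {a d : ℕ → ℝ} (hγ : γ ≤ 1)
    (hstep : ∀ k < m, a (k + 1) ≤ γ * (a k + b) + c * (d k - d (k + 1)))
    (hsnap : m * b' ≤ ∑ k ∈ range m, a (k + 1)) :
    (1 - γ) * (m * b') ≤ γ * (a 0 - a m) + γ * m * b + c * (d 0 - d m) := by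
  have hsum := sum_le_sum fun k hk => hstep k (mem_range.1 hk)
  rw [sum_add_distrib, ← mul_sum, ← mul_sum, sum_range_sub', sum_add_distrib, sum_const,
    card_range, nsmul_eq_mul] at hsum
  have hshift : ∑ k ∈ range m, a k = ∑ k ∈ range m, a (k + 1) + a 0 - a m := by
    linarith [sum_range_succ a m, sum_range_succ' a m]
  rw [hshift] at hsum
  have := mul_le_mul_of_nonneg_left hsnap (sub_nonneg.2 hγ)
  linarith

lemma sum_epochs_le {S m : ℕ} {γ c : ℝ} {a d : ℕ → ℕ → ℝ} {b : ℕ → ℝ} (hS : 0 < S)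
    (hγ0 : 0 ≤ γ) (hγ1 : γ ≤ 1) (hc : 0 ≤ c)
    (hstep : ∀ s < S, ∀ k < m, a s (k + 1) ≤ γ * (a s k + b s) + c * (d s k - d s (k + 1)))
    (hsnap : ∀ s < S, m * b (s + 1) ≤ ∑ k ∈ range m, a s (k + 1))
    (ha : ∀ s, s + 1 < S → a (s + 1) 0 = a s m) (hd : ∀ s, s + 1 < S → d (s + 1) 0 = d s m)
    (ha0 : 0 ≤ a (S - 1) m) (hb0 : 0 ≤ b S) (hd0 : 0 ≤ d (S - 1) m) :
    (1 - 2 * γ) * m * ∑ s ∈ range S, b (s + 1) ≤ γ * a 0 0 + γ * m * b 0 + c * d 0 0 := by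
  have hsum := sum_le_sum fun s hs =>
    epoch_le hγ1 (hstep s (mem_range.1 hs)) (hsnap s (mem_range.1 hs))
  have hta := sum_range_sub_of_chain (u := fun s => a s 0) (v := fun s => a s m) hS ha
  have htd := sum_range_sub_of_chain (u := fun s => d s 0) (v := fun s => d s m) hS hd
  rw [sum_add_distrib, sum_add_distrib, ← mul_sum, ← mul_sum, ← mul_sum, ← mul_sum, ← mul_sum,
    hta, htd] at hsum
  have hshift : ∑ s ∈ range S, b s = ∑ s ∈ range S, b (s + 1) + b 0 - b S := by
    linarith [sum_range_succ b S, sum_range_succ' b S]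
  rw [hshift] at hsum
  linarith [mul_nonneg hγ0 ha0, mul_nonneg (mul_nonneg hγ0 (Nat.cast_nonneg m)) hb0,
    mul_nonneg hc hd0]

lemma one_div_mul_le_of_epoch_bound {β L A D T : ℝ} {m S : ℕ} (hβ : 5 < β) (hm : 0 < m)
    (hS : 0 < S)
    (h : (1 - 2 * (2 / (β - 1))) * m * T ≤ 2 / (β - 1) * A + 2 / (β - 1) * m * A + L * β / 2 * D) :
    1 / S * T ≤ 2 * (m + 1) / ((β - 5) * m * S) * A
      + β * (β - 1) * L / (2 * (β - 5) * m * S) * D := by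
  have hβ1 : β - 1 ≠ 0 := by linarith
  have hcoef : 1 - 2 * (2 / (β - 1)) = (β - 5) / (β - 1) := by
    field_simp
    ring
  have hpos : 0 < (β - 5) / (β - 1) * m :=
    mul_pos (div_pos (by linarith) (by linarith)) (by exact_mod_cast hm)
  rw [hcoef, mul_comm, ← le_div_iff₀ hpos] at h
  calc 1 / (S : ℝ) * T
      ≤ 1 / S * ((2 / (β - 1) * A + 2 / (β - 1) * m * A + L * β / 2 * D)
        / ((β - 5) / (β - 1) * m)) := by gcongr
    _ = _ := by
      field_simp
      ring

end Recursion

section Expectation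

variable {E : Type*}

lemma ConvexOn.map_average_sub_le [AddCommGroup E] [Module ℝ E] {ι : Type*} {F : E → ℝ}
    (hF : ConvexOn ℝ Set.univ F) {t : Finset ι} (ht : t.Nonempty) (p : ι → E) (c : ℝ) :
    F ((1 / #t : ℝ) • ∑ i ∈ t, p i) - c ≤ (1 / #t : ℝ) * ∑ i ∈ t, (F (p i) - c) := by
  have hcard : (#t : ℝ) ≠ 0 := by exact_mod_cast ht.card_pos.ne'
  have hw : ∑ _i ∈ t, (1 / #t : ℝ) = 1 := by
    rw [sum_const, nsmul_eq_mul]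
    field_simp
  have := hF.map_sum_le (t := t) (w := fun _ => (1 / #t : ℝ)) (p := p) (fun _ _ => by positivity) hw
    fun _ _ => Set.mem_univ _
  rw [← smul_sum] at this
  simp only [smul_eq_mul, ← mul_sum] at this
  rw [sum_sub_distrib, sum_const, nsmul_eq_mul, mul_sub, ← mul_assoc, one_div_mul_cancel hcard,
    one_mul]
  linarith

variable {Ω : Type*} [Fintype Ω] [AddCommGroup E] [Module ℝ E] {F : E → ℝ}

lemma mul_expect_average_le (hF : ConvexOn ℝ Set.univ F) {m : ℕ} (hm : 0 < m) (c : ℝ)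
    (y : Ω → E) (x : Ω → ℕ → E) (hy : ∀ ω, y ω = (1 / m : ℝ) • ∑ k ∈ range m, x ω k) :
    m * 𝔼 ω, (F (y ω) - c) ≤ ∑ k ∈ range m, 𝔼 ω, (F (x ω k) - c) := by
  rw [← expect_sum_comm, mul_expect]
  refine expect_le_expect fun ω _ => ?_
  have := hF.map_average_sub_le (nonempty_range_iff.2 hm.ne') (x ω) c
  rw [card_range, ← hy] at this
  calc (m : ℝ) * (F (y ω) - c) ≤ m * (1 / m * ∑ k ∈ range m, (F (x ω k) - c)) := by gcongr
    _ = ∑ k ∈ range m, (F (x ω k) - c) := by field_simp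

lemma expect_le_average (hF : ConvexOn ℝ Set.univ F) {S : ℕ} (hS : 0 < S) (c : ℝ)
    (y : Ω → E) (x : Ω → ℕ → E) (hy : ∀ ω, F (y ω) ≤ F ((1 / S : ℝ) • ∑ s ∈ range S, x ω s)) :
    𝔼 ω, (F (y ω) - c) ≤ 1 / S * ∑ s ∈ range S, 𝔼 ω, (F (x ω s) - c) := by
  rw [← expect_sum_comm, mul_expect]
  refine expect_le_expect fun ω _ => ?_
  have := hF.map_average_sub_le (nonempty_range_iff.2 hS.ne') (x ω) c
  rw [card_range] at this
  linarith [hy ω]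

end Expectation

section Step

variable {E : Type*} [NormedAddCommGroup E] [InnerProductSpace ℝ E] [CompleteSpace E]
  {n S m : ℕ} {f : Fin n → E → ℝ} {favg g F : E → ℝ} {L β : ℝ} {xstar : E}
  {x : (Fin S → Fin m → Fin n) → ℕ → ℕ → E} {xt : (Fin S → Fin m → Fin n) → ℕ → E}

theorem expect_iterate_succ_le (hn : 0 < n) (hL : 0 < L) (hβ : 1 < β)
    (hf : ∀ i, IsLSmooth (f i) L) (hfc : ∀ i, ConvexOn ℝ Set.univ (f i))
    (hfavg : ∀ z, favg z = (1 / n : ℝ) * ∑ i, f i z) (hg : ConvexOn ℝ Set.univ g)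
    (hF : ∀ z, F z = favg z + g z) (hmin : ∀ z, F xstar ≤ F z)
    (hprox : ∀ ω (s : Fin S) (k : Fin m), IsProxGradStep g (L * β / 2)
      (vrGradient f favg (ω s k) (x ω s k) (xt ω s)) (x ω s k) (x ω s ((k : ℕ) + 1)))
    (hres : ∀ ω (s : Fin S) (k : Fin m) j,
      x (resample ω s k j) s k = x ω s k ∧ xt (resample ω s k j) s = xt ω s)
    (s : Fin S) (k : Fin m) :
    𝔼 ω, (F (x ω s ((k : ℕ) + 1)) - F xstar)
      ≤ 2 / (β - 1) * (𝔼 ω, (F (x ω s k) - F xstar) + 𝔼 ω, (F (xt ω s) - F xstar))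
        + L * β / 2 * (𝔼 ω, ‖x ω s k - xstar‖ ^ 2 - 𝔼 ω, ‖x ω s ((k : ℕ) + 1) - xstar‖ ^ 2) := by
  have := Fin.pos_iff_nonempty.1 hn
  have hω := fun ω => expect_vrGradient_step_le
    (Xp := fun j => x (resample ω s k j) s ((k : ℕ) + 1)) hn hL hβ hf hfc hfavg hg hF hmin
    fun j => by
      have := hprox (resample ω s k j) s k
      rwa [resample_apply_self, (hres ω s k j).1, (hres ω s k j).2] at this
  calc 𝔼 ω, (F (x ω s ((k : ℕ) + 1)) - F xstar)
      = 𝔼 ω, 𝔼 j, (F (x (resample ω s k j) s ((k : ℕ) + 1)) - F xstar) :=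
        (expect_expect_resample (fun ω => F (x ω s ((k : ℕ) + 1)) - F xstar) s k).symm
    _ ≤ 𝔼 ω, (2 / (β - 1) * ((F (x ω s k) - F xstar) + (F (xt ω s) - F xstar))
          + L * β / 2 * (‖x ω s k - xstar‖ ^ 2
            - 𝔼 j, ‖x (resample ω s k j) s ((k : ℕ) + 1) - xstar‖ ^ 2)) :=
        expect_le_expect fun ω _ => hω ω
    _ = _ := by
        rw [expect_add_distrib, ← mul_expect, ← mul_expect, expect_add_distrib,
          expect_sub_distrib _ (fun ω => ‖x ω s k - xstar‖ ^ 2),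
          expect_expect_resample (fun ω => ‖x ω s ((k : ℕ) + 1) - xstar‖ ^ 2) s k]

theorem sum_expect_snapshot_le (hn : 0 < n) (hm : 0 < m) (hS : 0 < S) (hL : 0 < L)
    (hβ : 3 ≤ β) (hf : ∀ i, IsLSmooth (f i) L) (hfc : ∀ i, ConvexOn ℝ Set.univ (f i))
    (hfavg : ∀ z, favg z = (1 / n : ℝ) * ∑ i, f i z) (hg : ConvexOn ℝ Set.univ g)
    (hF : ∀ z, F z = favg z + g z) (hFc : ConvexOn ℝ Set.univ F) (hmin : ∀ z, F xstar ≤ F z)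
    (hprox : ∀ ω (s : Fin S) (k : Fin m), IsProxGradStep g (L * β / 2)
      (vrGradient f favg (ω s k) (x ω s k) (xt ω s)) (x ω s k) (x ω s ((k : ℕ) + 1)))
    {x0 : E} (hxt0 : ∀ ω, xt ω 0 = x0) (hx0 : ∀ ω, x ω 0 0 = x0)
    (hstart : ∀ ω (s : ℕ), s + 1 < S → x ω (s + 1) 0 = x ω s m)
    (hsnap : ∀ ω (s : Fin S),
      xt ω ((s : ℕ) + 1) = (1 / m : ℝ) • ∑ k ∈ range m, x ω (s : ℕ) (k + 1)) :
    (1 - 2 * (2 / (β - 1))) * m * ∑ s ∈ range S, 𝔼 ω, (F (xt ω (s + 1)) - F xstar)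
      ≤ 2 / (β - 1) * (F x0 - F xstar) + 2 / (β - 1) * m * (F x0 - F xstar)
        + L * β / 2 * ‖x0 - xstar‖ ^ 2 := by
  have hres := iterate_resample (fun ω ω' s k hω hx ht => (hprox ω s k).unique
    (by rw [hω, hx, ht]; exact hprox ω' s k) hg (by positivity)) hxt0 hx0 hstart hsnap
  have : Nonempty (Fin S → Fin m → Fin n) := ⟨fun _ _ => ⟨0, hn⟩⟩
  have hrec := sum_epochs_le (γ := 2 / (β - 1)) (c := L * β / 2)
    (a := fun s k => 𝔼 ω, (F (x ω s k) - F xstar)) (d := fun s k => 𝔼 ω, ‖x ω s k - xstar‖ ^ 2)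
    (b := fun s => 𝔼 ω, (F (xt ω s) - F xstar)) hS (div_nonneg two_pos.le (by linarith))
    (by rw [div_le_one (by linarith)]; linarith) (by positivity)
    (fun s hs k hk => expect_iterate_succ_le hn hL (by linarith) hf hfc hfavg hg hF hmin hprox
      hres ⟨s, hs⟩ ⟨k, hk⟩)
    (fun s hs => mul_expect_average_le hFc hm _ (fun ω => xt ω (s + 1))
      (fun ω k => x ω s (k + 1)) (hsnap · ⟨s, hs⟩))
    (fun s hs => by simp only [hstart _ s hs]) (fun s hs => by simp only [hstart _ s hs])
    (expect_nonneg fun _ _ => sub_nonneg.2 (hmin _))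
    (expect_nonneg fun _ _ => sub_nonneg.2 (hmin _)) (expect_nonneg fun _ _ => by positivity)
  simpa only [hxt0, hx0, Fintype.expect_const] using hrec

end Step

/-- O(1/T) convergence of VR-SGD (Option I) for non-smooth composite,
non-strongly convex objectives F = f + g; inner steps are proximal steps (stated via
the minimizing property), and expectations are uniform averages over
`ω : Fin S → Fin m → Fin n`. -/
theorem stmt_13 (d n m S : ℕ) (hn : 0 < n) (hm : 0 < m) (hS : 0 < S)
    (L β η : ℝ) (hL : 0 < L) (hβ : 5 < β) (hη : η = 1 / (L * β))
    (f : Fin n → EuclideanSpace ℝ (Fin d) → ℝ)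
    (hconv : ∀ i, ConvexOn ℝ Set.univ (f i))
    (hdiff : ∀ i, Differentiable ℝ (f i))
    (hlip : ∀ i x y, ‖gradient (f i) x - gradient (f i) y‖ ≤ L * ‖x - y‖)
    (favg : EuclideanSpace ℝ (Fin d) → ℝ)
    (hfavg : ∀ x, favg x = (1 / n : ℝ) * ∑ i, f i x)
    (g : EuclideanSpace ℝ (Fin d) → ℝ) (hgconv : ConvexOn ℝ Set.univ g)
    (F : EuclideanSpace ℝ (Fin d) → ℝ) (hF : ∀ x, F x = favg x + g x)
    (xstar : EuclideanSpace ℝ (Fin d)) (hmin : ∀ x, F xstar ≤ F x)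
    (xt0 : EuclideanSpace ℝ (Fin d))
    (x : (Fin S → Fin m → Fin n) → ℕ → ℕ → EuclideanSpace ℝ (Fin d))
    (xt : (Fin S → Fin m → Fin n) → ℕ → EuclideanSpace ℝ (Fin d))
    (hxt0 : ∀ ω, xt ω 0 = xt0)
    (hstart0 : ∀ ω, x ω 0 0 = xt0)
    (hstart : ∀ ω (s : ℕ), s + 1 < S → x ω (s + 1) 0 = x ω s m)
    (hstep : ∀ ω (s : Fin S) (k : Fin m), ∀ y,
      g (x ω (s : ℕ) ((k : ℕ) + 1))
          + ⟪gradient (f (ω s k)) (x ω (s : ℕ) (k : ℕ))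
              - gradient (f (ω s k)) (xt ω (s : ℕ)) + gradient favg (xt ω (s : ℕ)),
            x ω (s : ℕ) ((k : ℕ) + 1)⟫
          + (1 / (2 * η)) * ‖x ω (s : ℕ) ((k : ℕ) + 1) - x ω (s : ℕ) (k : ℕ)‖ ^ 2
        ≤ g y
          + ⟪gradient (f (ω s k)) (x ω (s : ℕ) (k : ℕ))
              - gradient (f (ω s k)) (xt ω (s : ℕ)) + gradient favg (xt ω (s : ℕ)), y⟫
          + (1 / (2 * η)) * ‖y - x ω (s : ℕ) (k : ℕ)‖ ^ 2)
    (hsnap : ∀ ω (s : Fin S),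
      xt ω ((s : ℕ) + 1) = (1 / m : ℝ) • ∑ k ∈ Finset.range m, x ω (s : ℕ) (k + 1))
    (xhat : (Fin S → Fin m → Fin n) → EuclideanSpace ℝ (Fin d))
    (hout : ∀ ω,
      (F (xt ω S) ≤ F ((1 / S : ℝ) • ∑ s ∈ Finset.range S, xt ω (s + 1)) →
        xhat ω = xt ω S) ∧
      (¬ F (xt ω S) ≤ F ((1 / S : ℝ) • ∑ s ∈ Finset.range S, xt ω (s + 1)) →
        xhat ω = (1 / S : ℝ) • ∑ s ∈ Finset.range S, xt ω (s + 1))) :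
    (Fintype.card (Fin S → Fin m → Fin n) : ℝ)⁻¹ *
        ∑ ω : Fin S → Fin m → Fin n, (F (xhat ω)) - F xstar
      ≤ (2 * (m + 1) / ((β - 5) * m * S)) * (F xt0 - F xstar)
        + (β * (β - 1) * L / (2 * (β - 5) * m * S)) * ‖xt0 - xstar‖ ^ 2 := by
  have hf : ∀ i, IsLSmooth (f i) L := fun i => ⟨hdiff i, hlip i⟩
  have hFc : ConvexOn ℝ Set.univ F := by
    rw [show F = favg + g from funext hF]
    exact (convexOn_of_eq_avg hconv hfavg).add hgconv
  have hq : 1 / (2 * η) = L * β / 2 := by rw [hη]; field_simp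
  have hrec := sum_expect_snapshot_le hn hm hS hL (by linarith) hf hconv hfavg hgconv hF hFc hmin
    (fun ω s k => hq ▸ hstep ω s k) hxt0 hstart0 hstart hsnap
  have hbest : ∀ ω, F (xhat ω) ≤ F ((1 / S : ℝ) • ∑ s ∈ range S, xt ω (s + 1)) := by
    intro ω
    by_cases h : F (xt ω S) ≤ F ((1 / S : ℝ) • ∑ s ∈ range S, xt ω (s + 1))
    · rwa [(hout ω).1 h]
    · rw [(hout ω).2 h]
  have : Nonempty (Fin S → Fin m → Fin n) := ⟨fun _ _ => ⟨0, hn⟩⟩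
  calc _ = 𝔼 ω, (F (xhat ω) - F xstar) := by
        rw [expect_sub_distrib, Fintype.expect_const, Fintype.expect_eq_sum_div_card,
          inv_mul_eq_div]
    _ ≤ 1 / S * ∑ s ∈ range S, 𝔼 ω, (F (xt ω (s + 1)) - F xstar) :=
        expect_le_average hFc hS _ _ _ hbest
    _ ≤ _ := one_div_mul_le_of_epoch_bound hβ hm hS hrec
end

section
/- Momentum epoch inequality: Consider the momentum-accelerated VR-SGD (Algorithm 3, Option II) on F = f + g with F being L-smooth, step η_0 = 1/(α₁ L) with α₁ > 2 and momentum weight w_s ∈ (0, 1] satisfying 1 − w_s − 1/(α₁−1) ≥ 0. Then for every epoch s: E[F(x̃^s) − F(x*)] ≤ (1 − w_s)[F(x̃^{s−1}) − F(x*)] + (w_s²/(2 m η_0)) E[‖x* − v_0^s‖² − ‖x* − v_m^s‖²]. -/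
/-!
Each inner step is first bounded deterministically: the descent lemma for `F`, Young's inequality
for the error `g_k - ∇F(x_k)` and the three-point identity for the `v`-update bound
`F(x_{k+1}) + w²/(2η₀) ‖x* - v_{k+1}‖²` by `F(x_k) + w²/(2η₀) ‖x* - v_k‖²` plus
`⟨g_k, u - x_k⟩ + ‖g_k - ∇F(x_k)‖² / (2(α₁-1)L)`, where `u = w x* + (1-w) x̃`. The iterate `x_k`
does not depend on the `k`-th sampled index, so averaging over that index turns `g_k` into
`∇F(x_k)` and, by co-coercivity of each `∇F_i`, bounds the error by
`2L [F(x̃) - F(x_k) - ⟨∇F(x_k), x̃ - x_k⟩]`. The condition `1 - w - 1/(α₁-1) ≥ 0` lets the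
convexity of `F` absorb both terms into `w F(x*) + (1-w) F(x̃) - F(x_k)`. Summing over the epoch
telescopes the potential, and Jensen's inequality passes to the snapshot average.
-/

open scoped RealInnerProductSpace

section Gradient

variable {H : Type*} [NormedAddCommGroup H] [InnerProductSpace ℝ H] [CompleteSpace H]
  {φ ψ : H → ℝ} {g g' x : H}

theorem HasGradientAt.add (hφ : HasGradientAt φ g x) (hψ : HasGradientAt ψ g' x) :
    HasGradientAt (fun y => φ y + ψ y) (g + g') x := by
  rw [hasGradientAt_iff_hasFDerivAt, map_add]
  exact hφ.hasFDerivAt.add hψ.hasFDerivAt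

theorem HasGradientAt.const_mul (c : ℝ) (hφ : HasGradientAt φ g x) :
    HasGradientAt (fun y => c * φ y) (c • g) x := by
  rw [hasGradientAt_iff_hasFDerivAt, map_smul]
  exact hφ.hasFDerivAt.const_mul c

theorem HasGradientAt.fun_sum {ι : Type*} {s : Finset ι} {Φ : ι → H → ℝ} {G : ι → H}
    (h : ∀ i ∈ s, HasGradientAt (Φ i) (G i) x) :
    HasGradientAt (fun y => ∑ i ∈ s, Φ i y) (∑ i ∈ s, G i) x := by
  rw [hasGradientAt_iff_hasFDerivAt, map_sum]
  exact HasFDerivAt.fun_sum fun i hi => (h i hi).hasFDerivAt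

theorem HasGradientAt.hasDerivAt_comp_lineMap {a b : H} {t : ℝ}
    (hφ : HasGradientAt φ g (AffineMap.lineMap a b t)) :
    HasDerivAt (fun s : ℝ => φ (AffineMap.lineMap a b s)) ⟪g, b - a⟫ t := by
  have := hφ.hasFDerivAt.comp_hasDerivAt t AffineMap.hasDerivAt_lineMap
  simpa [Function.comp_def] using this

variable {G : H → H}

theorem ConvexOn.inner_le_sub_of_hasGradientAt (hφ : ConvexOn ℝ Set.univ φ)
    (hG : ∀ z, HasGradientAt φ (G z) z) (a b : H) :
    ⟪G a, b - a⟫ ≤ φ b - φ a := by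
  have hline : ConvexOn ℝ Set.univ (fun s : ℝ => φ (AffineMap.lineMap a b s)) :=
    hφ.comp_affineMap (AffineMap.lineMap a b)
  have hderiv := (hG (AffineMap.lineMap a b (0 : ℝ))).hasDerivAt_comp_lineMap
  simpa [slope] using hline.le_slope_of_hasDerivAt trivial trivial zero_lt_one
    (by simpa using hderiv)

theorem le_add_inner_add_sq_of_gradient_lipschitz {K : ℝ} (hG : ∀ z, HasGradientAt φ (G z) z)
    (hlip : ∀ a b, ‖G a - G b‖ ≤ K * ‖a - b‖) (a b : H) :
    φ b ≤ φ a + ⟪G a, b - a⟫ + K / 2 * ‖b - a‖ ^ 2 := by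
  set ψ : ℝ → ℝ := fun t =>
    φ (AffineMap.lineMap a b t) - t * ⟪G a, b - a⟫ - K / 2 * t ^ 2 * ‖b - a‖ ^ 2
  have hψ : ∀ t, HasDerivAt ψ
      (⟪G (AffineMap.lineMap a b t), b - a⟫ - ⟪G a, b - a⟫ - K * t * ‖b - a‖ ^ 2) t := fun t =>
    (((hG _).hasDerivAt_comp_lineMap.sub ((hasDerivAt_id t).mul_const _)).sub
      (((hasDerivAt_pow 2 t).const_mul (K / 2)).mul_const (‖b - a‖ ^ 2))).congr_deriv
      (by simp only [Nat.cast_ofNat]; ring)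
  have hψ_anti : AntitoneOn ψ (Set.Icc 0 1) := by
    refine antitoneOn_of_hasDerivWithinAt_nonpos (convex_Icc 0 1)
      (fun t _ => (hψ t).continuousAt.continuousWithinAt)
      (fun t _ => (hψ t).hasDerivWithinAt) fun t ht => ?_
    rw [interior_Icc] at ht
    have hdist : ‖AffineMap.lineMap a b t - a‖ = t * ‖b - a‖ := by
      rw [AffineMap.lineMap_apply_module', add_sub_cancel_right, norm_smul,
        Real.norm_of_nonneg ht.1.le]
    calc ⟪G (AffineMap.lineMap a b t), b - a⟫ - ⟪G a, b - a⟫ - K * t * ‖b - a‖ ^ 2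
        = ⟪G (AffineMap.lineMap a b t) - G a, b - a⟫ - K * t * ‖b - a‖ ^ 2 := by
          rw [inner_sub_left]
      _ ≤ K * ‖AffineMap.lineMap a b t - a‖ * ‖b - a‖ - K * t * ‖b - a‖ ^ 2 := by
          gcongr
          exact (real_inner_le_norm _ _).trans
            (mul_le_mul_of_nonneg_right (hlip _ _) (norm_nonneg _))
      _ = 0 := by rw [hdist]; ring
  have := hψ_anti (Set.left_mem_Icc.2 zero_le_one) (Set.right_mem_Icc.2 zero_le_one) zero_le_one
  simp only [ψ, AffineMap.lineMap_apply_zero, AffineMap.lineMap_apply_one] at this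
  linarith

theorem ConvexOn.norm_sub_sq_le_of_gradient_lipschitz {K : ℝ} (hK : 0 < K)
    (hφ : ConvexOn ℝ Set.univ φ) (hG : ∀ z, HasGradientAt φ (G z) z)
    (hlip : ∀ a b, ‖G a - G b‖ ≤ K * ‖a - b‖) (a b : H) :
    ‖G a - G b‖ ^ 2 ≤ 2 * K * (φ a - φ b - ⟪G b, a - b⟫) := by
  -- compare the support inequality at `b` with the descent inequality at `a`, both at `z`
  set z := a - K⁻¹ • (G a - G b)
  have hsupp := hφ.inner_le_sub_of_hasGradientAt hG b z
  have hdesc := le_add_inner_add_sq_of_gradient_lipschitz hG hlip a z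
  have hza : z - a = -(K⁻¹ • (G a - G b)) := by simp [z]
  have hzb : z - b = (a - b) + (z - a) := by abel
  rw [hzb, inner_add_right] at hsupp
  rw [hza] at hsupp hdesc
  rw [inner_neg_right, real_inner_smul_right] at hsupp hdesc
  rw [norm_neg, norm_smul, Real.norm_of_nonneg (inv_nonneg.2 hK.le)] at hdesc
  have hsplit : ⟪G a, G a - G b⟫ - ⟪G b, G a - G b⟫ = ‖G a - G b‖ ^ 2 := by
    rw [← inner_sub_left, real_inner_self_eq_norm_sq]
  have hsq : K / 2 * (K⁻¹ * ‖G a - G b‖) ^ 2 = K⁻¹ * ‖G a - G b‖ ^ 2 / 2 := by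
    field_simp
  have key : K⁻¹ * ‖G a - G b‖ ^ 2 / 2 ≤ φ a - φ b - ⟪G b, a - b⟫ := by
    linear_combination hsupp + hdesc - K⁻¹ * hsplit + hsq
  calc ‖G a - G b‖ ^ 2 = 2 * K * (K⁻¹ * ‖G a - G b‖ ^ 2 / 2) := by field_simp
    _ ≤ 2 * K * (φ a - φ b - ⟪G b, a - b⟫) := by gcongr

end Gradient

theorem ConvexOn.fun_sum {𝕜 E β ι : Type*} [Semiring 𝕜] [PartialOrder 𝕜] [AddCommMonoid E]
    [AddCommMonoid β] [PartialOrder β] [IsOrderedAddMonoid β] [SMul 𝕜 E]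
    [Module 𝕜 β] {t : Set E} {s : Finset ι} {f : ι → E → β}
    (ht : Convex 𝕜 t) (h : ∀ i ∈ s, ConvexOn 𝕜 t (f i)) :
    ConvexOn 𝕜 t (fun x => ∑ i ∈ s, f i x) := by
  classical
  induction s using Finset.induction_on with
  | empty => simpa using convexOn_const (0 : β) ht
  | insert a s has ih =>
    simp only [Finset.sum_insert has]
    exact (h a (Finset.mem_insert_self a s)).add
      (ih fun i hi => h i (Finset.mem_insert_of_mem hi))

theorem real_inner_le_norm_sq_div_add {E : Type*} [NormedAddCommGroup E] [InnerProductSpace ℝ E]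
    (a b : E) {t : ℝ} (ht : 0 < t) : ⟪a, b⟫ ≤ ‖a‖ ^ 2 / (2 * t) + t / 2 * ‖b‖ ^ 2 := by
  refine (real_inner_le_norm a b).trans (sub_nonneg.1 ?_)
  have : ‖a‖ ^ 2 / (2 * t) + t / 2 * ‖b‖ ^ 2 - ‖a‖ * ‖b‖ = (‖a‖ - t * ‖b‖) ^ 2 / (2 * t) := by
    field_simp
    ring
  rw [this]
  positivity

theorem sum_norm_sub_sq_le_sum_norm_sq {ι E : Type*} [Fintype ι] [NormedAddCommGroup E]
    [InnerProductSpace ℝ E] (a : ι → E) (b : E) (hb : ∑ i, a i = (Fintype.card ι : ℝ) • b) :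
    ∑ i, ‖a i - b‖ ^ 2 ≤ ∑ i, ‖a i‖ ^ 2 := by
  have hexpand : ∑ i, ‖a i - b‖ ^ 2 = ∑ i, ‖a i‖ ^ 2 - Fintype.card ι * ‖b‖ ^ 2 := by
    simp only [norm_sub_sq_real, Finset.sum_add_distrib, Finset.sum_sub_distrib, ← Finset.mul_sum,
      ← sum_inner, hb, real_inner_smul_left, real_inner_self_eq_norm_sq, Finset.sum_const,
      Finset.card_univ, nsmul_eq_mul]
    ring
  rw [hexpand]
  linarith [mul_nonneg (Nat.cast_nonneg (α := ℝ) (Fintype.card ι)) (sq_nonneg ‖b‖)]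

theorem Fintype.sum_sum_update {κ ι M : Type*} [Fintype κ] [DecidableEq κ] [Fintype ι]
    [AddCommMonoid M] (k : κ) (Ψ : (κ → ι) → M) :
    ∑ ω, ∑ i, Ψ (Function.update ω k i) = Fintype.card ι • ∑ ω, Ψ ω := by
  let e := Equiv.funSplitAt k ι
  have hupd : ∀ a i ρ, Function.update (e.symm (a, ρ)) k i = e.symm (i, ρ) := by
    intro a i ρ
    ext j
    by_cases hj : j = k
    · subst hj; simp [e]
    · simp [e, hj]
  calc ∑ ω, ∑ i, Ψ (Function.update ω k i)
      = ∑ ρ, ∑ a : ι, ∑ i, Ψ (e.symm (i, ρ)) := by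
        rw [← e.symm.sum_comp, Fintype.sum_prod_type_right]
        simp only [hupd]
    _ = Fintype.card ι • ∑ ω, Ψ ω := by
        rw [← e.symm.sum_comp, Fintype.sum_prod_type_right, Finset.smul_sum]
        simp

theorem Fintype.card_mul_sum_apply_eq_sum_sum {κ ι α : Type*} [Fintype κ] [DecidableEq κ]
    [Fintype ι] (k : κ) (X : (κ → ι) → α) (hX : ∀ ω i, X (Function.update ω k i) = X ω)
    (h : ι → α → ℝ) :
    Fintype.card ι * ∑ ω, h (ω k) (X ω) = ∑ ω, ∑ i, h i (X ω) := by
  rw [← nsmul_eq_mul, ← Fintype.sum_sum_update k]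
  simp [hX]

section Epoch

variable {ι H : Type*} [AddCommGroup H] [Module ℝ H]

def svrgEstimator (G : ι → H → H) (gradF : H → H) (xtprev : H) (i : ι) (p : H) : H :=
  G i p - G i xtprev + gradF xtprev

/-- The iterates `x_k^s, v_k^s` of one epoch, as functions of the sequence `ω` of sampled indices;
`xtprev` is the previous snapshot `x̃^{s-1}` and `e` the stochastic gradient. -/
structure MomentumEpoch (m : ℕ) (η w : ℝ) (e : ι → H → H) (xtprev v0 : H)
    (x v : (Fin m → ι) → ℕ → H) : Prop where
  v_zero : ∀ ω, v ω 0 = v0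
  x_zero : ∀ ω, x ω 0 = w • v0 + (1 - w) • xtprev
  v_succ : ∀ ω (k : Fin m), v ω (k + 1) = v ω k - (η / w) • e (ω k) (x ω k)
  x_succ : ∀ ω (k : Fin m), x ω (k + 1) = xtprev + w • (v ω (k + 1) - xtprev)

namespace MomentumEpoch

variable {m : ℕ} {η w : ℝ} {e : ι → H → H} {xtprev v0 : H} {x v : (Fin m → ι) → ℕ → H}

theorem x_eq (hE : MomentumEpoch m η w e xtprev v0 x v) (ω : Fin m → ι) {k : ℕ} (hk : k ≤ m) :
    x ω k = xtprev + w • (v ω k - xtprev) := by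
  cases k with
  | zero => rw [hE.x_zero, hE.v_zero]; module
  | succ j => exact hE.x_succ ω ⟨j, hk⟩

theorem update_eq (hE : MomentumEpoch m η w e xtprev v0 x v) (ω : Fin m → ι) (k : Fin m) (i : ι)
    {j : ℕ} (hj : j ≤ k) :
    x (Function.update ω k i) j = x ω j ∧ v (Function.update ω k i) j = v ω j := by
  induction j with
  | zero => simp only [hE.x_zero, hE.v_zero, and_self]
  | succ j ih =>
    obtain ⟨hx, hv⟩ := ih (Nat.le_of_succ_le hj)
    have hjk : (⟨j, by omega⟩ : Fin m) ≠ k := Fin.ne_of_val_ne (by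
      show j ≠ (k : ℕ); omega)
    have hv' : v (Function.update ω k i) (j + 1) = v ω (j + 1) := by
      rw [hE.v_succ _ ⟨j, by omega⟩, hE.v_succ _ ⟨j, by omega⟩]
      simp only [hx, hv, Function.update_of_ne hjk]
    exact ⟨by rw [hE.x_succ _ ⟨j, by omega⟩, hE.x_succ _ ⟨j, by omega⟩, hv'], hv'⟩

end MomentumEpoch

end Epoch

section MomentumSVRG

variable {ι H : Type*} [NormedAddCommGroup H] [InnerProductSpace ℝ H] [CompleteSpace H]

theorem momentum_step_le {F : H → ℝ} {gradF : H → H} {L α η w : ℝ} (hL : 0 < L) (hα : 1 < α)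
    (hη : η = 1 / (α * L)) (hw : 0 < w) (hF : ∀ z, HasGradientAt F (gradF z) z)
    (hlip : ∀ a b, ‖gradF a - gradF b‖ ≤ L * ‖a - b‖) {xtprev xstar v v' p q e : H}
    (hp : p = xtprev + w • (v - xtprev)) (hv' : v' = v - (η / w) • e)
    (hq : q = xtprev + w • (v' - xtprev)) :
    F q + w ^ 2 / (2 * η) * ‖xstar - v'‖ ^ 2
      ≤ F p + ⟪e, w • xstar + (1 - w) • xtprev - p⟫ + ‖e - gradF p‖ ^ 2 / (2 * (α - 1) * L)
        + w ^ 2 / (2 * η) * ‖xstar - v‖ ^ 2 := by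
  set u := w • xstar + (1 - w) • xtprev
  set d := v - v'
  have hη0 : 0 < η := by rw [hη]; positivity
  have he : e = (w / η) • d := by
    rw [show d = (η / w) • e by simp [d, hv'], smul_smul,
      show w / η * (η / w) = 1 by field_simp, one_smul]
  have hqp : q - p = -(w • d) := by rw [hq, hp]; simp only [d]; module
  have hqu : q - u = w • (v' - xstar) := by rw [hq]; simp only [u]; module
  have hdesc := le_add_inner_add_sq_of_gradient_lipschitz hF hlip p q
  have hsplit : ⟪gradF p, q - p⟫ = ⟪e, u - p⟫ + ⟪e, q - u⟫ + ⟪gradF p - e, q - p⟫ := by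
    rw [inner_sub_left, ← inner_add_right, sub_add_sub_cancel']; ring
  have hthree_point : ⟪e, q - u⟫
      = w ^ 2 / (2 * η) * (‖xstar - v‖ ^ 2 - ‖xstar - v'‖ ^ 2 - ‖d‖ ^ 2) := by
    have : ‖xstar - v‖ ^ 2 = ‖d‖ ^ 2 - 2 * ⟪d, xstar - v'⟫ + ‖xstar - v'‖ ^ 2 := by
      rw [show xstar - v = (xstar - v') - d by simp only [d]; abel, norm_sub_sq_real,
        real_inner_comm]; ring
    rw [this, he, hqu, real_inner_smul_left, real_inner_smul_right, ← neg_sub xstar v',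
      inner_neg_right]
    ring
  have hyoung := real_inner_le_norm_sq_div_add (gradF p - e) (q - p)
    (by nlinarith : 0 < (α - 1) * L)
  have hqp_sq : ‖q - p‖ ^ 2 = w ^ 2 * ‖d‖ ^ 2 := by
    rw [hqp, norm_neg, norm_smul, Real.norm_of_nonneg hw.le]; ring
  have hcoef : (L / 2 + (α - 1) * L / 2) * w ^ 2 = w ^ 2 / (2 * η) := by
    rw [hη]; field_simp; ring
  rw [norm_sub_rev, ← mul_assoc 2] at hyoung
  linear_combination hdesc + hsplit + hthree_point + hyoung + (L / 2 + (α - 1) * L / 2) * hqp_sq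
    + ‖d‖ ^ 2 * hcoef

variable [Fintype ι]

structure ConvexSmoothSum (L : ℝ) (Φ : ι → H → ℝ) (G : ι → H → H) (F : H → ℝ)
    (gradF : H → H) : Prop where
  hasGradientAt_component : ∀ i z, HasGradientAt (Φ i) (G i z) z
  convexOn_component : ∀ i, ConvexOn ℝ Set.univ (Φ i)
  lipschitz_component : ∀ i a b, ‖G i a - G i b‖ ≤ L * ‖a - b‖
  sum_eq : ∀ z, ∑ i, Φ i z = Fintype.card ι * F z
  sum_grad_eq : ∀ z, ∑ i, G i z = (Fintype.card ι : ℝ) • gradF z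

namespace ConvexSmoothSum

variable {L : ℝ} {Φ : ι → H → ℝ} {G : ι → H → H} {F : H → ℝ} {gradF : H → H}

theorem sum_svrgEstimator (hS : ConvexSmoothSum L Φ G F gradF) (xtprev p : H) :
    ∑ i, svrgEstimator G gradF xtprev i p = (Fintype.card ι : ℝ) • gradF p := by
  simp only [svrgEstimator, Finset.sum_add_distrib, Finset.sum_sub_distrib, hS.sum_grad_eq,
    Finset.sum_const, Finset.card_univ, ← Nat.cast_smul_eq_nsmul ℝ]
  abel

theorem sum_norm_svrgEstimator_sub_sq_le (hS : ConvexSmoothSum L Φ G F gradF) (hL : 0 < L)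
    (xtprev p : H) :
    ∑ i, ‖svrgEstimator G gradF xtprev i p - gradF p‖ ^ 2
      ≤ 2 * L * Fintype.card ι * (F xtprev - F p - ⟪gradF p, xtprev - p⟫) := by
  have hcentered : ∀ i, svrgEstimator G gradF xtprev i p - gradF p
      = (G i p - G i xtprev) - (gradF p - gradF xtprev) := fun i => by
    simp only [svrgEstimator]; abel
  calc ∑ i, ‖svrgEstimator G gradF xtprev i p - gradF p‖ ^ 2
      = ∑ i, ‖(G i p - G i xtprev) - (gradF p - gradF xtprev)‖ ^ 2 := by simp only [hcentered]
    _ ≤ ∑ i, ‖G i p - G i xtprev‖ ^ 2 := by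
      refine sum_norm_sub_sq_le_sum_norm_sq _ _ ?_
      rw [Finset.sum_sub_distrib, hS.sum_grad_eq, hS.sum_grad_eq, smul_sub]
    _ ≤ ∑ i, 2 * L * (Φ i xtprev - Φ i p - ⟪G i p, xtprev - p⟫) := by
      refine Finset.sum_le_sum fun i _ => ?_
      rw [norm_sub_rev]
      exact (hS.convexOn_component i).norm_sub_sq_le_of_gradient_lipschitz hL
        (hS.hasGradientAt_component i) (hS.lipschitz_component i) xtprev p
    _ = 2 * L * Fintype.card ι * (F xtprev - F p - ⟪gradF p, xtprev - p⟫) := by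
      rw [← Finset.mul_sum, Finset.sum_sub_distrib, Finset.sum_sub_distrib, ← sum_inner,
        hS.sum_eq, hS.sum_eq, hS.sum_grad_eq, real_inner_smul_left]
      ring

variable [Nonempty ι]

theorem eq_inv_mul_sum (hS : ConvexSmoothSum L Φ G F gradF) :
    F = fun z => (Fintype.card ι : ℝ)⁻¹ * ∑ i, Φ i z := by
  ext z
  rw [hS.sum_eq, inv_mul_cancel_left₀ (by positivity)]

theorem grad_eq_inv_smul_sum (hS : ConvexSmoothSum L Φ G F gradF) (z : H) :
    gradF z = (Fintype.card ι : ℝ)⁻¹ • ∑ i, G i z := by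
  rw [hS.sum_grad_eq, inv_smul_smul₀ (by positivity)]

theorem hasGradientAt (hS : ConvexSmoothSum L Φ G F gradF) (z : H) :
    HasGradientAt F (gradF z) z := by
  rw [hS.eq_inv_mul_sum, hS.grad_eq_inv_smul_sum]
  exact (HasGradientAt.fun_sum fun i _ => hS.hasGradientAt_component i z).const_mul _

theorem convexOn (hS : ConvexSmoothSum L Φ G F gradF) : ConvexOn ℝ Set.univ F := by
  rw [hS.eq_inv_mul_sum]
  exact (ConvexOn.fun_sum convex_univ fun i _ => hS.convexOn_component i).smul (by positivity)

theorem lipschitz (hS : ConvexSmoothSum L Φ G F gradF) (a b : H) :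
    ‖gradF a - gradF b‖ ≤ L * ‖a - b‖ := by
  rw [hS.grad_eq_inv_smul_sum, hS.grad_eq_inv_smul_sum, ← smul_sub, ← Finset.sum_sub_distrib,
    norm_smul, Real.norm_of_nonneg (by positivity), inv_mul_le_iff₀ (by positivity)]
  calc ‖∑ i, (G i a - G i b)‖ ≤ ∑ i, ‖G i a - G i b‖ := norm_sum_le _ _
    _ ≤ ∑ _i : ι, L * ‖a - b‖ := Finset.sum_le_sum fun i _ => hS.lipschitz_component i a b
    _ = Fintype.card ι * (L * ‖a - b‖) := by simp

theorem sum_svrg_step_le (hS : ConvexSmoothSum L Φ G F gradF) (hL : 0 < L) {α w : ℝ}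
    (hα : 1 < α) (hw : 0 < w) (hwα : 1 - w - 1 / (α - 1) ≥ 0) (xtprev xstar p : H) :
    ∑ i, (⟪svrgEstimator G gradF xtprev i p, w • xstar + (1 - w) • xtprev - p⟫
        + ‖svrgEstimator G gradF xtprev i p - gradF p‖ ^ 2 / (2 * (α - 1) * L))
      ≤ Fintype.card ι * (w * F xstar + (1 - w) * F xtprev - F p) := by
  have hβ : 0 < α - 1 := by linarith
  have hinner : ∑ i, ⟪svrgEstimator G gradF xtprev i p, w • xstar + (1 - w) • xtprev - p⟫
      = Fintype.card ι * (w * ⟪gradF p, xstar - p⟫ + (1 - w) * ⟪gradF p, xtprev - p⟫) := by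
    rw [← sum_inner, hS.sum_svrgEstimator, real_inner_smul_left,
      show w • xstar + (1 - w) • xtprev - p = w • (xstar - p) + (1 - w) • (xtprev - p) by module,
      inner_add_right, real_inner_smul_right, real_inner_smul_right]
  have hvar : ∑ i, ‖svrgEstimator G gradF xtprev i p - gradF p‖ ^ 2 / (2 * (α - 1) * L)
      ≤ Fintype.card ι * (1 / (α - 1) * (F xtprev - F p - ⟪gradF p, xtprev - p⟫)) := by
    rw [← Finset.sum_div, div_le_iff₀ (by positivity)]
    refine (hS.sum_norm_svrgEstimator_sub_sq_le hL xtprev p).trans_eq ?_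
    field_simp
  have hstar := hS.convexOn.inner_le_sub_of_hasGradientAt hS.hasGradientAt p xstar
  have hsnap := hS.convexOn.inner_le_sub_of_hasGradientAt hS.hasGradientAt p xtprev
  rw [Finset.sum_add_distrib, hinner]
  refine (add_le_add_right hvar _).trans ?_
  rw [← mul_add]
  gcongr
  nlinarith [mul_le_mul_of_nonneg_left hstar hw.le, mul_le_mul_of_nonneg_left hsnap hwα]

end ConvexSmoothSum

namespace MomentumEpoch

variable [Nonempty ι] {m : ℕ} {L α η w : ℝ} {Φ : ι → H → ℝ} {G : ι → H → H} {F : H → ℝ}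
  {gradF : H → H} {xtprev v0 : H} {x v : (Fin m → ι) → ℕ → H}

theorem sum_step_le (hE : MomentumEpoch m η w (svrgEstimator G gradF xtprev) xtprev v0 x v)
    (hS : ConvexSmoothSum L Φ G F gradF) (hL : 0 < L) (hα : 1 < α) (hη : η = 1 / (α * L))
    (hw : 0 < w) (hwα : 1 - w - 1 / (α - 1) ≥ 0) (xstar : H) (k : Fin m) :
    ∑ ω, (F (x ω (k + 1)) + w ^ 2 / (2 * η) * ‖xstar - v ω (k + 1)‖ ^ 2)
      ≤ ∑ ω, (w * F xstar + (1 - w) * F xtprev + w ^ 2 / (2 * η) * ‖xstar - v ω k‖ ^ 2) := by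
  set T : ι → H → ℝ := fun i p =>
    ⟪svrgEstimator G gradF xtprev i p, w • xstar + (1 - w) • xtprev - p⟫
      + ‖svrgEstimator G gradF xtprev i p - gradF p‖ ^ 2 / (2 * (α - 1) * L)
  have hdet : ∀ ω, F (x ω (k + 1)) + w ^ 2 / (2 * η) * ‖xstar - v ω (k + 1)‖ ^ 2
      ≤ T (ω k) (x ω k) + (F (x ω k) + w ^ 2 / (2 * η) * ‖xstar - v ω k‖ ^ 2) := fun ω => by
    have := momentum_step_le hL hα hη hw hS.hasGradientAt hS.lipschitz (xstar := xstar)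
      (hE.x_eq ω k.2.le) (hE.v_succ ω k) (hE.x_succ ω k)
    simp only [T]
    linarith
  -- the index `ω k` is independent of the iterate `x ω k`, so it can be averaged out
  have havg : ∑ ω, T (ω k) (x ω k) ≤ ∑ ω, (w * F xstar + (1 - w) * F xtprev - F (x ω k)) := by
    have hcard : (0 : ℝ) < Fintype.card ι := by exact_mod_cast Fintype.card_pos
    refine le_of_mul_le_mul_left ?_ hcard
    rw [Fintype.card_mul_sum_apply_eq_sum_sum k (fun ω => x ω k)
      (fun ω i => (hE.update_eq ω k i le_rfl).1) T, Finset.mul_sum]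
    exact Finset.sum_le_sum fun ω _ =>
      hS.sum_svrg_step_le hL hα hw hwα xtprev xstar (x ω k)
  calc _ ≤ ∑ ω, (T (ω k) (x ω k) + (F (x ω k) + w ^ 2 / (2 * η) * ‖xstar - v ω k‖ ^ 2)) :=
        Finset.sum_le_sum fun ω _ => hdet ω
    _ = ∑ ω, T (ω k) (x ω k) + ∑ ω, (F (x ω k) + w ^ 2 / (2 * η) * ‖xstar - v ω k‖ ^ 2) :=
        Finset.sum_add_distrib
    _ ≤ ∑ ω, (w * F xstar + (1 - w) * F xtprev - F (x ω k))
          + ∑ ω, (F (x ω k) + w ^ 2 / (2 * η) * ‖xstar - v ω k‖ ^ 2) :=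
        (add_le_add_iff_right _).2 havg
    _ = _ := by
        rw [← Finset.sum_add_distrib]
        exact Finset.sum_congr rfl fun ω _ => by ring

theorem sum_range_sum_le (hE : MomentumEpoch m η w (svrgEstimator G gradF xtprev) xtprev v0 x v)
    (hS : ConvexSmoothSum L Φ G F gradF) (hL : 0 < L) (hα : 1 < α) (hη : η = 1 / (α * L))
    (hw : 0 < w) (hwα : 1 - w - 1 / (α - 1) ≥ 0) (xstar : H) :
    ∑ k ∈ Finset.range m, ∑ ω, F (x ω (k + 1))
      ≤ m * ∑ _ω : Fin m → ι, (w * F xstar + (1 - w) * F xtprev)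
        + w ^ 2 / (2 * η) * ∑ ω, (‖xstar - v0‖ ^ 2 - ‖xstar - v ω m‖ ^ 2) := by
  set S : ℕ → ℝ := fun k => w ^ 2 / (2 * η) * ∑ ω, ‖xstar - v ω k‖ ^ 2
  have hstep : ∀ k ∈ Finset.range m, ∑ ω, F (x ω (k + 1))
      ≤ ∑ _ω : Fin m → ι, (w * F xstar + (1 - w) * F xtprev) + (S k - S (k + 1)) := by
    intro k hk
    have := hE.sum_step_le hS hL hα hη hw hwα xstar ⟨k, Finset.mem_range.1 hk⟩
    simp only [S, Finset.sum_add_distrib, ← Finset.mul_sum] at this ⊢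
    linarith
  refine (Finset.sum_le_sum hstep).trans_eq ?_
  rw [Finset.sum_add_distrib, Finset.sum_const, Finset.card_range, nsmul_eq_mul,
    Finset.sum_range_sub', Finset.sum_sub_distrib]
  simp only [S, hE.v_zero, mul_sub]

theorem expected_gap_le (hE : MomentumEpoch m η w (svrgEstimator G gradF xtprev) xtprev v0 x v)
    (hS : ConvexSmoothSum L Φ G F gradF) (hm : 0 < m) (hL : 0 < L) (hα : 1 < α)
    (hη : η = 1 / (α * L)) (hw : 0 < w) (hwα : 1 - w - 1 / (α - 1) ≥ 0) (xstar : H)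
    {xt : (Fin m → ι) → H} (hxt : ∀ ω, xt ω = (1 / m : ℝ) • ∑ k ∈ Finset.range m, x ω (k + 1)) :
    (Fintype.card (Fin m → ι) : ℝ)⁻¹ * ∑ ω, (F (xt ω) - F xstar)
      ≤ (1 - w) * (F xtprev - F xstar) + w ^ 2 / (2 * m * η) *
        ((Fintype.card (Fin m → ι) : ℝ)⁻¹ *
          ∑ ω, (‖xstar - v0‖ ^ 2 - ‖xstar - v ω m‖ ^ 2)) := by
  have hm' : (0 : ℝ) < m := Nat.cast_pos.2 hm
  have hN : (0 : ℝ) < Fintype.card (Fin m → ι) := Nat.cast_pos.2 Fintype.card_pos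
  have hjensen : ∀ ω, F (xt ω) ≤ (1 / m : ℝ) * ∑ k ∈ Finset.range m, F (x ω (k + 1)) := by
    intro ω
    have := hS.convexOn.map_sum_le (t := Finset.range m) (w := fun _ => (1 / m : ℝ))
      (p := fun k => x ω (k + 1)) (fun _ _ => by positivity) (by simp [hm'.ne'])
      (fun _ _ => Set.mem_univ _)
    simpa only [hxt, Finset.smul_sum, smul_eq_mul, Finset.mul_sum] using this
  have hsum : ∑ ω, F (xt ω) ≤ (1 / m : ℝ) * ∑ k ∈ Finset.range m, ∑ ω, F (x ω (k + 1)) := by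
    rw [Finset.sum_comm, Finset.mul_sum]
    exact Finset.sum_le_sum fun ω _ => hjensen ω
  have hbound : ∑ ω, F (xt ω) ≤ Fintype.card (Fin m → ι) * (w * F xstar + (1 - w) * F xtprev)
      + w ^ 2 / (2 * m * η) * ∑ ω, (‖xstar - v0‖ ^ 2 - ‖xstar - v ω m‖ ^ 2) := by
    calc _ ≤ (1 / m : ℝ) * ∑ k ∈ Finset.range m, ∑ ω, F (x ω (k + 1)) := hsum
      _ ≤ (1 / m : ℝ) * (m * ∑ _ω : Fin m → ι, (w * F xstar + (1 - w) * F xtprev)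
          + w ^ 2 / (2 * η) * ∑ ω, (‖xstar - v0‖ ^ 2 - ‖xstar - v ω m‖ ^ 2)) := by
        gcongr
        exact hE.sum_range_sum_le hS hL hα hη hw hwα xstar
      _ = _ := by
        rw [Finset.sum_const, Finset.card_univ, nsmul_eq_mul]
        field_simp
  rw [Finset.sum_sub_distrib, Finset.sum_const, Finset.card_univ, nsmul_eq_mul]
  calc _ ≤ (Fintype.card (Fin m → ι) : ℝ)⁻¹ *
        (Fintype.card (Fin m → ι) * (w * F xstar + (1 - w) * F xtprev)
          + w ^ 2 / (2 * m * η) * ∑ ω, (‖xstar - v0‖ ^ 2 - ‖xstar - v ω m‖ ^ 2)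
          - Fintype.card (Fin m → ι) * F xstar) := by gcongr
    _ = _ := by field_simp; ring

end MomentumEpoch

end MomentumSVRG

theorem stmt_17_general (d n m : ℕ) (hn : 0 < n) (hm : 0 < m)
    (L α₁ w η₀ : ℝ) (hL : 0 < L) (hα₁ : 2 < α₁) (hη₀ : η₀ = 1 / (α₁ * L))
    (hw0 : 0 < w) (hwcond : 1 - w - 1 / (α₁ - 1) ≥ 0)
    (f : Fin n → EuclideanSpace ℝ (Fin d) → ℝ)
    (hdiff : ∀ i, Differentiable ℝ (f i))
    (favg : EuclideanSpace ℝ (Fin d) → ℝ)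
    (hfavg : ∀ x, favg x = (1 / n : ℝ) * ∑ i, f i x)
    (g : EuclideanSpace ℝ (Fin d) → ℝ) (hgdiff : Differentiable ℝ g)
    (hconvFi : ∀ i, ConvexOn ℝ Set.univ (fun z => f i z + g z))
    (hlipFi : ∀ i x y,
      ‖(gradient (f i) x + gradient g x) - (gradient (f i) y + gradient g y)‖
        ≤ L * ‖x - y‖)
    (F : EuclideanSpace ℝ (Fin d) → ℝ) (hF : ∀ x, F x = favg x + g x)
    (xstar : EuclideanSpace ℝ (Fin d))
    (xtprev v0 : EuclideanSpace ℝ (Fin d))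
    (v x : (Fin m → Fin n) → ℕ → EuclideanSpace ℝ (Fin d))
    (hv0 : ∀ ω, v ω 0 = v0)
    (hx0 : ∀ ω, x ω 0 = w • v0 + (1 - w) • xtprev)
    (hvstep : ∀ ω (k : Fin m),
      v ω ((k : ℕ) + 1) = v ω (k : ℕ) -
        (η₀ / w) • (gradient (f (ω k)) (x ω (k : ℕ)) - gradient (f (ω k)) xtprev
          + gradient favg xtprev + gradient g (x ω (k : ℕ))))
    (hxstep : ∀ ω (k : Fin m),
      x ω ((k : ℕ) + 1) = xtprev + w • (v ω ((k : ℕ) + 1) - xtprev))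
    (xt : (Fin m → Fin n) → EuclideanSpace ℝ (Fin d))
    (hxt : ∀ ω, xt ω = (1 / m : ℝ) • ∑ k ∈ Finset.range m, x ω (k + 1)) :
    (Fintype.card (Fin m → Fin n) : ℝ)⁻¹ *
        ∑ ω : Fin m → Fin n, (F (xt ω) - F xstar)
      ≤ (1 - w) * (F xtprev - F xstar)
        + (w ^ 2 / (2 * m * η₀)) *
          ((Fintype.card (Fin m → Fin n) : ℝ)⁻¹ *
            ∑ ω : Fin m → Fin n, (‖xstar - v0‖ ^ 2 - ‖xstar - v ω m‖ ^ 2)) := by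
  have : Nonempty (Fin n) := ⟨⟨0, hn⟩⟩
  have hn' : (n : ℝ) ≠ 0 := Nat.cast_ne_zero.2 hn.ne'
  have hgrad_favg : ∀ z, gradient favg z = (1 / n : ℝ) • ∑ i, gradient (f i) z := fun z => by
    rw [show favg = fun y => (1 / n : ℝ) * ∑ i, f i y from funext hfavg]
    exact ((HasGradientAt.fun_sum fun i _ => (hdiff i z).hasGradientAt).const_mul _).gradient
  have hS : ConvexSmoothSum L (fun i z => f i z + g z) (fun i z => gradient (f i) z + gradient g z)
      F (fun z => gradient favg z + gradient g z) := by
    refine ⟨fun i z => (hdiff i z).hasGradientAt.add (hgdiff z).hasGradientAt, hconvFi, hlipFi,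
      fun z => ?_, fun z => ?_⟩
    · rw [hF, hfavg, Finset.sum_add_distrib]
      simp only [Finset.sum_const, Finset.card_univ, Fintype.card_fin, nsmul_eq_mul]
      field_simp
    · rw [hgrad_favg, Finset.sum_add_distrib, smul_add, smul_smul]
      simp only [Finset.sum_const, Finset.card_univ, Fintype.card_fin, ← Nat.cast_smul_eq_nsmul ℝ]
      rw [mul_one_div_cancel hn', one_smul]
  refine MomentumEpoch.expected_gap_le ⟨hv0, hx0, fun ω k => ?_, hxstep⟩ hS hm hL
    (by linarith) hη₀ hw0 hwcond xstar hxt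
  rw [hvstep, svrgEstimator]
  abel_nf

/-- per-epoch inequality for momentum-accelerated VR-SGD (Algorithm 3,
Option II) on `F = f + g`, with step `η₀ = 1/(α₁L)`, `α₁ > 2`, momentum weight
`w ∈ (0,1]` satisfying `1 − w − 1/(α₁−1) ≥ 0`. Expectations over the epoch's random
indices are uniform averages over `ω : Fin m → Fin n`. -/
theorem stmt_17 (d n m : ℕ) (hn : 0 < n) (hm : 0 < m)
    (L α₁ w η₀ : ℝ) (hL : 0 < L) (hα₁ : 2 < α₁) (hη₀ : η₀ = 1 / (α₁ * L))
    (hw0 : 0 < w) (hw1 : w ≤ 1) (hwcond : 1 - w - 1 / (α₁ - 1) ≥ 0)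
    (f : Fin n → EuclideanSpace ℝ (Fin d) → ℝ)
    (hdiff : ∀ i, Differentiable ℝ (f i))
    (favg : EuclideanSpace ℝ (Fin d) → ℝ)
    (hfavg : ∀ x, favg x = (1 / n : ℝ) * ∑ i, f i x)
    (g : EuclideanSpace ℝ (Fin d) → ℝ) (hgdiff : Differentiable ℝ g)
    (hconvFi : ∀ i, ConvexOn ℝ Set.univ (fun z => f i z + g z))
    (hlipFi : ∀ i x y,
      ‖(gradient (f i) x + gradient g x) - (gradient (f i) y + gradient g y)‖
        ≤ L * ‖x - y‖)
    (F : EuclideanSpace ℝ (Fin d) → ℝ) (hF : ∀ x, F x = favg x + g x)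
    (xstar : EuclideanSpace ℝ (Fin d)) (hmin : ∀ x, F xstar ≤ F x)
    (xtprev v0 : EuclideanSpace ℝ (Fin d))
    (v x : (Fin m → Fin n) → ℕ → EuclideanSpace ℝ (Fin d))
    (hv0 : ∀ ω, v ω 0 = v0)
    (hx0 : ∀ ω, x ω 0 = w • v0 + (1 - w) • xtprev)
    (hvstep : ∀ ω (k : Fin m),
      v ω ((k : ℕ) + 1) = v ω (k : ℕ) -
        (η₀ / w) • (gradient (f (ω k)) (x ω (k : ℕ)) - gradient (f (ω k)) xtprev
          + gradient favg xtprev + gradient g (x ω (k : ℕ))))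
    (hxstep : ∀ ω (k : Fin m),
      x ω ((k : ℕ) + 1) = xtprev + w • (v ω ((k : ℕ) + 1) - xtprev))
    (xt : (Fin m → Fin n) → EuclideanSpace ℝ (Fin d))
    (hxt : ∀ ω, xt ω = (1 / m : ℝ) • ∑ k ∈ Finset.range m, x ω (k + 1)) :
    (Fintype.card (Fin m → Fin n) : ℝ)⁻¹ *
        ∑ ω : Fin m → Fin n, (F (xt ω) - F xstar)
      ≤ (1 - w) * (F xtprev - F xstar)
        + (w ^ 2 / (2 * m * η₀)) *
          ((Fintype.card (Fin m → Fin n) : ℝ)⁻¹ *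
            ∑ ω : Fin m → Fin n, (‖xstar - v0‖ ^ 2 - ‖xstar - v ω m‖ ^ 2)) :=
  stmt_17_general d n m hn hm L α₁ w η₀ hL hα₁ hη₀ hw0 hwcond f hdiff favg hfavg g hgdiff hconvFi
    hlipFi F hF xstar xtprev v0 v x hv0 hx0 hvstep hxstep xt hxt
end
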